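/- For every pair φ, φ′ ∈ W there exists a unique global section α⁽²⁾(φ,φ′) ∈ H⁰(O_C(L)) such that φ′·α(φ) − φ·α(φ′) = α⁽²⁾(φ,φ′)·e_ξ, the equality taking place in H⁰(E_ξ ⊗ O_C(L)). -/
import Mathlib


noncomputable section

open Module

/-- The degree of a divisor (a finitely supported `ℤ`-valued function on the
points of the curve). -/
def divDeg {P : Type} (D : P →₀ ℤ) : ℤ := D.sum fun _ n => n

/-- A divisor is effective if all its multiplicities are nonnegative. -/
def divEff {P : Type} (D : P →₀ ℤ) : Prop := ∀ p, 0 ≤ D p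

/-- `hasGrd h0 r d` : the curve (whose section-dimension function for line
bundles `O_C(D)` is `h0`) carries a linear system `g^r_d`, i.e. there is an
effective divisor of degree `d` moving in a linear system of projective
dimension at least `r`. -/
def hasGrd {P : Type} (h0 : (P →₀ ℤ) → ℕ) (r d : ℕ) : Prop :=
  ∃ D : P →₀ ℤ, divEff D ∧ divDeg D = (d : ℤ) ∧ r + 1 ≤ h0 D

/-- A divisor `A` is very ample iff `O_C(A)` separates points and tangent
vectors: for every effective divisor `D` of degree two,
`h⁰(A − D) = h⁰(A) − 2`. -/
def divVeryAmple {P : Type} (h0 : (P →₀ ℤ) → ℕ) (A : P →₀ ℤ) : Prop :=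
  ∀ D : P →₀ ℤ, divEff D → divDeg D = 2 → h0 (A - D) + 2 = h0 A


/-- Axiomatic model, at the level of spaces of global sections, of the data
attached to a class `ξ ∈ H¹(O_C(−L)) ≅ Ext¹(O_C(L), O_C)` on a smooth complex
projective curve `C`, i.e. to an extension `0 → O_C → E_ξ → O_C(L) → 0`
(the Koszul sequence of the section `e_ξ ∈ H⁰(E_ξ)`, the image of
`1 ∈ H⁰(O_C)`), together with its twist by `O_C(L)`,
`0 → O_C(L) → E_ξ ⊗ O_C(L) → O_C(2L) → 0`:

* `H0L = H⁰(O_C(L))`, `H0E = H⁰(E_ξ)`, `H0EL = H⁰(E_ξ ⊗ O_C(L))`,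
  `H0L2 = H⁰(O_C(2L))`, `H1O = H¹(O_C)`;
* `cup` is the cup product with `ξ`, `H⁰(O_C(L)) → H¹(O_C)`;
* `wedgeE : H⁰(E_ξ) → H⁰(O_C(L))`, `s ↦ s ∧ e_ξ`, whose kernel is `ℂ·e_ξ`
  (i.e. `H⁰(O_C)·e_ξ`) and whose range is `W = ker(cup)` — exactness of
  `0 → H⁰(O_C) → H⁰(E_ξ) → H⁰(O_C(L)) → H¹(O_C)`;
* `emb : H⁰(O_C(L)) → H⁰(E_ξ ⊗ O_C(L))` is multiplication by `e_ξ`, and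
  `wedgeEL : H⁰(E_ξ ⊗ O_C(L)) → H⁰(O_C(2L))` is `∧ e_ξ`, with
  `0 → H⁰(O_C(L)) → H⁰(E_ξ ⊗ O_C(L)) → H⁰(O_C(2L))` exact;
* `smulE` is multiplication `H⁰(O_C(L)) ⊗ H⁰(E_ξ) → H⁰(E_ξ ⊗ O_C(L))` and
  `smulL` is multiplication `H⁰(O_C(L)) ⊗ H⁰(O_C(L)) → H⁰(O_C(2L))`. -/
structure ExtensionData where
  H0L : Type
  [instH0LAdd : AddCommGroup H0L]
  [instH0LMod : Module ℂ H0L]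
  H0E : Type
  [instH0EAdd : AddCommGroup H0E]
  [instH0EMod : Module ℂ H0E]
  H0EL : Type
  [instH0ELAdd : AddCommGroup H0EL]
  [instH0ELMod : Module ℂ H0EL]
  H0L2 : Type
  [instH0L2Add : AddCommGroup H0L2]
  [instH0L2Mod : Module ℂ H0L2]
  H1O : Type
  [instH1OAdd : AddCommGroup H1O]
  [instH1OMod : Module ℂ H1O]
  cup : H0L →ₗ[ℂ] H1O
  eξ : H0E
  wedgeE : H0E →ₗ[ℂ] H0L
  wedgeE_eξ : wedgeE eξ = 0
  ker_wedgeE : ∀ s : H0E, wedgeE s = 0 → ∃ c : ℂ, s = c • eξ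
  range_wedgeE : LinearMap.range wedgeE = LinearMap.ker cup
  emb : H0L →ₗ[ℂ] H0EL
  emb_inj : Function.Injective emb
  wedgeEL : H0EL →ₗ[ℂ] H0L2
  exact_EL : LinearMap.ker wedgeEL = LinearMap.range emb
  smulE : H0L →ₗ[ℂ] H0E →ₗ[ℂ] H0EL
  smulL : H0L →ₗ[ℂ] H0L →ₗ[ℂ] H0L2
  smulL_comm : ∀ φ ψ : H0L, smulL φ ψ = smulL ψ φ
  smulE_eξ : ∀ φ : H0L, smulE φ eξ = emb φ
  wedgeEL_smulE : ∀ (φ : H0L) (s : H0E), wedgeEL (smulE φ s) = smulL φ (wedgeE s)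

attribute [instance] ExtensionData.instH0LAdd ExtensionData.instH0LMod
  ExtensionData.instH0EAdd ExtensionData.instH0EMod
  ExtensionData.instH0ELAdd ExtensionData.instH0ELMod
  ExtensionData.instH0L2Add ExtensionData.instH0L2Mod
  ExtensionData.instH1OAdd ExtensionData.instH1OMod

/-- **Lemma 1.3.**  Let `W = ker(ξ : H⁰(O_C(L)) → H¹(O_C))` and let
`α : W → H⁰(E_ξ)` be a splitting of `0 → H⁰(O_C) → H⁰(E_ξ) → W → 0`.  For
every pair `φ, φ′ ∈ W` there is a unique global section
`α⁽²⁾(φ,φ′) ∈ H⁰(O_C(L))` such that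
`φ′·α(φ) − φ·α(φ′) = α⁽²⁾(φ,φ′)·e_ξ` in `H⁰(E_ξ ⊗ O_C(L))`. -/
theorem alpha2_exists_unique (D : ExtensionData)
    (α : LinearMap.ker D.cup →ₗ[ℂ] D.H0E)
    (hα : ∀ φ : LinearMap.ker D.cup, D.wedgeE (α φ) = (φ : D.H0L)) :
    ∀ φ φ' : LinearMap.ker D.cup,
      ∃! c : D.H0L,
        D.smulE (φ' : D.H0L) (α φ) - D.smulE (φ : D.H0L) (α φ') = D.emb c := by
  intro φ φ'
  have hker : D.smulE (φ' : D.H0L) (α φ) - D.smulE (φ : D.H0L) (α φ') ∈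
      LinearMap.ker D.wedgeEL := by
    simp only [LinearMap.mem_ker, map_sub, D.wedgeEL_smulE, hα]
    rw [D.smulL_comm, sub_self]
  rw [D.exact_EL] at hker
  obtain ⟨c, hc⟩ := hker
  exact ⟨c, hc.symm, fun c' hc' => D.emb_inj (hc' ▸ hc.symm ▸ rfl)⟩
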